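/- arXiv:1611.00143 — 9 statements merged into one kernel-verified Lean document; each statement's English description precedes it below -/
import Mathlib

section
/- Let t, λ, α be real numbers with 1 − λα > 0, and let g_i, g_j be complex numbers with g_j ≠ g_i; write dg := g_j − g_i. Assume T_i := 1 + t|g_i|² > 0, T_j := 1 + t|g_j|² > 0, and |dg|²(1−t) + T_i T_j λα ≠ 0. Let E_i be any 2×2 complex matrix with det E_i = 1, and set E_j := (1−λα)^{−1/2} · E_i · [[1, dg],[λα/dg, 1]]. For m ∈ {i,j} set L_m := [[0, √(T_m)],[−1/√(T_m), −t·conj(g_m)/√(T_m)]], f_m := (E_m L_m)(E_m L_m)^* and n_m := (E_m L_m)·diag(1,−1)·(E_m L_m)^*, where ^* denotes conjugate transpose. Then n_j − n_i = −κ·(f_j − f_i), where κ = (−|dg|²(1+t) + T_i T_j λα)/(|dg|²(1−t) + T_i T_j λα). -/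
/-!
Writing `fₘ = Eₘ (Lₘ Lₘᴴ) Eₘᴴ`, `nₘ = Eₘ (Lₘ diag(1,-1) Lₘᴴ) Eₘᴴ` and `Eⱼ = c • Eᵢ A` with
`c c̄ = (1 - λα)⁻¹`, both differences are congruences by `Eᵢ` of explicit `2 × 2` matrices, so `Eᵢ`
drops out and the claim becomes an identity between those matrices.  Treating `g` and `ḡ` as
independent variables, that identity is a rational-function identity over an arbitrary field,
checked entrywise after clearing denominators.
-/

open Matrix Complex
open scoped ComplexConjugate

namespace LinearWeingarten

section Field

variable {K : Type*} [Field K]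

/-- `L Lᴴ` for the frame `L` of `g`, with `h` in place of `conj g` and `T = 1 + t g h`. -/
def pointMatrix (t T g h : K) : Matrix (Fin 2) (Fin 2) K :=
  !![T, -t * g; -t * h, (1 + t ^ 2 * g * h) / T]

/-- `L diag(1, -1) Lᴴ` for the frame `L` of `g`, with `h` in place of `conj g`. -/
def normalMatrix (t T g h : K) : Matrix (Fin 2) (Fin 2) K :=
  !![-T, t * g; t * h, (1 - t ^ 2 * g * h) / T]

def edgeTransition (s d : K) : Matrix (Fin 2) (Fin 2) K :=
  !![1, d; s / d, 1]

theorem edgeTransition_transpose (s d : K) : (edgeTransition s d)ᵀ = !![1, s / d; d, 1] := by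
  ext i j
  fin_cases i <;> fin_cases j <;> rfl

variable {t s g₁ g₂ h₁ h₂ T₁ T₂ : K}

theorem edge_relation_cleared (hd : g₂ - g₁ ≠ 0) (he : h₂ - h₁ ≠ 0)
    (hT₁ : T₁ = 1 + t * g₁ * h₁) (hT₂ : T₂ = 1 + t * g₂ * h₂) (hT₁0 : T₁ ≠ 0) (hT₂0 : T₂ ≠ 0) :
    ((g₂ - g₁) * (h₂ - h₁) * (1 - t) + T₁ * T₂ * s) •
      (edgeTransition s (g₂ - g₁) * normalMatrix t T₂ g₂ h₂ * (edgeTransition s (h₂ - h₁))ᵀ -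
        (1 - s) • normalMatrix t T₁ g₁ h₁) =
    ((g₂ - g₁) * (h₂ - h₁) * (1 + t) - T₁ * T₂ * s) •
      (edgeTransition s (g₂ - g₁) * pointMatrix t T₂ g₂ h₂ * (edgeTransition s (h₂ - h₁))ᵀ -
        (1 - s) • pointMatrix t T₁ g₁ h₁) := by
  rw [edgeTransition_transpose]
  ext i j
  fin_cases i <;> fin_cases j <;>
  · simp [edgeTransition, pointMatrix, normalMatrix]
    field_simp
    subst hT₁ hT₂
    ring

theorem edge_relation (hd : g₂ - g₁ ≠ 0) (he : h₂ - h₁ ≠ 0)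
    (hT₁ : T₁ = 1 + t * g₁ * h₁) (hT₂ : T₂ = 1 + t * g₂ * h₂) (hT₁0 : T₁ ≠ 0) (hT₂0 : T₂ ≠ 0)
    (hs : 1 - s ≠ 0) (hQ : (g₂ - g₁) * (h₂ - h₁) * (1 - t) + T₁ * T₂ * s ≠ 0) :
    (1 - s)⁻¹ • (edgeTransition s (g₂ - g₁) * normalMatrix t T₂ g₂ h₂ *
        (edgeTransition s (h₂ - h₁))ᵀ) - normalMatrix t T₁ g₁ h₁ =
      -((-((g₂ - g₁) * (h₂ - h₁)) * (1 + t) + T₁ * T₂ * s) /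
          ((g₂ - g₁) * (h₂ - h₁) * (1 - t) + T₁ * T₂ * s)) •
        ((1 - s)⁻¹ • (edgeTransition s (g₂ - g₁) * pointMatrix t T₂ g₂ h₂ *
          (edgeTransition s (h₂ - h₁))ᵀ) - pointMatrix t T₁ g₁ h₁) := by
  set Q := (g₂ - g₁) * (h₂ - h₁) * (1 - t) + T₁ * T₂ * s
  set κ := (-((g₂ - g₁) * (h₂ - h₁)) * (1 + t) + T₁ * T₂ * s) / Q
  have hκ : (g₂ - g₁) * (h₂ - h₁) * (1 + t) - T₁ * T₂ * s = Q * -κ := by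
    rw [mul_neg, mul_div_cancel₀ _ hQ]
    ring
  have cleared := edge_relation_cleared (s := s) hd he hT₁ hT₂ hT₁0 hT₂0
  rw [hκ, mul_smul, smul_right_inj hQ] at cleared
  rw [← inv_smul_smul₀ hs (normalMatrix t T₁ g₁ h₁), ← inv_smul_smul₀ hs (pointMatrix t T₁ g₁ h₁),
    ← smul_sub, ← smul_sub, cleared, smul_comm]

end Field

noncomputable def frame (t T : ℝ) (g : ℂ) : Matrix (Fin 2) (Fin 2) ℂ :=
  !![0, ((Real.sqrt T : ℝ) : ℂ);
    -1 / ((Real.sqrt T : ℝ) : ℂ), -(t : ℂ) * conj g / ((Real.sqrt T : ℝ) : ℂ)]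

theorem ofReal_eq_ofReal_sqrt_sq {T : ℝ} (hT : 0 ≤ T) : (T : ℂ) = ((Real.sqrt T : ℝ) : ℂ) ^ 2 := by
  rw [← ofReal_pow, Real.sq_sqrt hT]

theorem frame_mul_conjTranspose (t : ℝ) {T : ℝ} (hT : 0 < T) (g : ℂ) :
    frame t T g * (frame t T g)ᴴ = pointMatrix (t : ℂ) (T : ℂ) g (conj g) := by
  have hsqrt : ((Real.sqrt T : ℝ) : ℂ) ≠ 0 := ofReal_ne_zero.mpr (Real.sqrt_ne_zero'.mpr hT)
  rw [ofReal_eq_ofReal_sqrt_sq hT.le]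
  ext i j
  fin_cases i <;> fin_cases j <;>
    simp [frame, pointMatrix, Matrix.mul_apply] <;> field_simp

theorem frame_mul_signature_mul_conjTranspose (t : ℝ) {T : ℝ} (hT : 0 < T) (g : ℂ) :
    frame t T g * !![1, 0; 0, -1] * (frame t T g)ᴴ = normalMatrix (t : ℂ) (T : ℂ) g (conj g) := by
  have hsqrt : ((Real.sqrt T : ℝ) : ℂ) ≠ 0 := ofReal_ne_zero.mpr (Real.sqrt_ne_zero'.mpr hT)
  rw [ofReal_eq_ofReal_sqrt_sq hT.le]
  ext i j
  fin_cases i <;> fin_cases j <;> simp [frame, normalMatrix, Matrix.mul_apply] <;> field_simp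
  ring

theorem edgeTransition_conjTranspose (r : ℝ) (d : ℂ) :
    (edgeTransition (r : ℂ) d)ᴴ = (edgeTransition (r : ℂ) (conj d))ᵀ := by
  ext i j
  fin_cases i <;> fin_cases j <;> simp [edgeTransition]

section Congruence

variable {n α : Type*} [Fintype n] [CommSemiring α] [StarRing α]

theorem mul_mul_mul_conjTranspose (E L D : Matrix n n α) :
    E * L * D * (E * L)ᴴ = E * (L * D * Lᴴ) * Eᴴ := by
  simp only [conjTranspose_mul, Matrix.mul_assoc]

theorem smul_mul_mul_mul_conjTranspose (c : α) (E A L D : Matrix n n α) :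
    c • (E * A) * L * D * (c • (E * A) * L)ᴴ =
      (star c * c) • (E * (A * (L * D * Lᴴ) * Aᴴ) * Eᴴ) := by
  simp only [conjTranspose_mul, conjTranspose_smul, Matrix.smul_mul, Matrix.mul_smul, smul_smul,
    Matrix.mul_assoc]

end Congruence

theorem ofReal_one_add_mul_norm_sq (t : ℝ) (g : ℂ) :
    ((1 + t * ‖g‖ ^ 2 : ℝ) : ℂ) = 1 + t * g * conj g := by
  rw [mul_assoc, Complex.mul_conj, ← Complex.sq_norm]
  norm_cast

theorem ofReal_norm_sub_sq (a b : ℂ) : (‖a - b‖ : ℂ) ^ 2 = (a - b) * (conj a - conj b) := by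
  rw [← map_sub, Complex.mul_conj, ← ofReal_pow, Complex.sq_norm]

theorem star_ofReal_inv_sqrt_mul_self {r : ℝ} (hr : 0 ≤ r) :
    star (((Real.sqrt r)⁻¹ : ℝ) : ℂ) * (((Real.sqrt r)⁻¹ : ℝ) : ℂ) = (r : ℂ)⁻¹ := by
  rw [star_def, conj_ofReal, ← ofReal_mul, ← mul_inv, Real.mul_self_sqrt hr, ofReal_inv]

theorem edge_relation_frame {t s : ℝ} (hs : 1 - s ≠ 0) {gi gj : ℂ} (hgij : gj ≠ gi) {Ti Tj : ℝ}
    (hTi : Ti = 1 + t * ‖gi‖ ^ 2) (hTj : Tj = 1 + t * ‖gj‖ ^ 2) (hTipos : 0 < Ti) (hTjpos : 0 < Tj)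
    (hden : ‖gj - gi‖ ^ 2 * (1 - t) + Ti * Tj * s ≠ 0) :
    ((1 - s : ℝ) : ℂ)⁻¹ • (edgeTransition (s : ℂ) (gj - gi) *
        (frame t Tj gj * !![1, 0; 0, -1] * (frame t Tj gj)ᴴ) * (edgeTransition (s : ℂ) (gj - gi))ᴴ) -
      frame t Ti gi * !![1, 0; 0, -1] * (frame t Ti gi)ᴴ =
    -(((-(‖gj - gi‖ ^ 2) * (1 + t) + Ti * Tj * s) / (‖gj - gi‖ ^ 2 * (1 - t) + Ti * Tj * s) : ℝ) : ℂ) •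
      (((1 - s : ℝ) : ℂ)⁻¹ • (edgeTransition (s : ℂ) (gj - gi) * (frame t Tj gj * (frame t Tj gj)ᴴ) *
        (edgeTransition (s : ℂ) (gj - gi))ᴴ) - frame t Ti gi * (frame t Ti gi)ᴴ) := by
  have hd : gj - gi ≠ 0 := sub_ne_zero.mpr hgij
  have he : conj gj - conj gi ≠ 0 := by
    rw [← map_sub]
    exact (map_ne_zero _).mpr hd
  have hTiC : (Ti : ℂ) = 1 + t * gi * conj gi := by rw [hTi, ofReal_one_add_mul_norm_sq]
  have hTjC : (Tj : ℂ) = 1 + t * gj * conj gj := by rw [hTj, ofReal_one_add_mul_norm_sq]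
  have hsC : 1 - (s : ℂ) ≠ 0 := by exact_mod_cast hs
  have hQ : (gj - gi) * (conj gj - conj gi) * (1 - t) + Ti * Tj * (s : ℂ) ≠ 0 := by
    rw [← ofReal_norm_sub_sq]
    exact_mod_cast hden
  rw [frame_mul_conjTranspose t hTipos, frame_mul_conjTranspose t hTjpos,
    frame_mul_signature_mul_conjTranspose t hTipos, frame_mul_signature_mul_conjTranspose t hTjpos,
    edgeTransition_conjTranspose, map_sub]
  push_cast
  rw [ofReal_norm_sub_sq]
  exact edge_relation hd he hTiC hTjC (ofReal_ne_zero.mpr hTipos.ne')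
    (ofReal_ne_zero.mpr hTjpos.ne') hsC hQ

end LinearWeingarten

open LinearWeingarten

theorem stmt_0_general (t lam alpha : ℝ) (hla : 1 - lam * alpha > 0)
    (gi gj : ℂ) (hgij : gj ≠ gi) (dg : ℂ) (hdg : dg = gj - gi)
    (Ti Tj : ℝ)
    (hTi : Ti = 1 + t * ‖gi‖ ^ 2)
    (hTj : Tj = 1 + t * ‖gj‖ ^ 2)
    (hTipos : Ti > 0) (hTjpos : Tj > 0)
    (hden : ‖dg‖ ^ 2 * (1 - t) + Ti * Tj * (lam * alpha) ≠ 0)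
    (Ei Ej Li Lj fi fj ni nj : Matrix (Fin 2) (Fin 2) ℂ)
    (hEj : Ej = (((Real.sqrt (1 - lam * alpha))⁻¹ : ℝ) : ℂ) •
      (Ei * !![1, dg; ((lam * alpha : ℝ) : ℂ) / dg, 1]))
    (hLi : Li = !![0, ((Real.sqrt Ti : ℝ) : ℂ);
      -1 / ((Real.sqrt Ti : ℝ) : ℂ), -(t : ℂ) * (starRingEnd ℂ) gi / ((Real.sqrt Ti : ℝ) : ℂ)])
    (hLj : Lj = !![0, ((Real.sqrt Tj : ℝ) : ℂ);
      -1 / ((Real.sqrt Tj : ℝ) : ℂ), -(t : ℂ) * (starRingEnd ℂ) gj / ((Real.sqrt Tj : ℝ) : ℂ)])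
    (hfi : fi = (Ei * Li) * (Ei * Li)ᴴ)
    (hfj : fj = (Ej * Lj) * (Ej * Lj)ᴴ)
    (hni : ni = (Ei * Li) * !![(1 : ℂ), 0; 0, -1] * (Ei * Li)ᴴ)
    (hnj : nj = (Ej * Lj) * !![(1 : ℂ), 0; 0, -1] * (Ej * Lj)ᴴ)
    (κ : ℝ)
    (hκ : κ = (-(‖dg‖ ^ 2) * (1 + t) + Ti * Tj * (lam * alpha)) /
      (‖dg‖ ^ 2 * (1 - t) + Ti * Tj * (lam * alpha))) :
    nj - ni = -((κ : ℂ)) • (fj - fi) := by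
  have hEj' : Ej = (((Real.sqrt (1 - lam * alpha))⁻¹ : ℝ) : ℂ) •
      (Ei * edgeTransition ((lam * alpha : ℝ) : ℂ) dg) := hEj
  have hLi' : Li = frame t Ti gi := hLi
  have hLj' : Lj = frame t Tj gj := hLj
  subst hdg hEj' hLi' hLj' hfi hfj hni hnj hκ
  have hone (M : Matrix (Fin 2) (Fin 2) ℂ) : M * Mᴴ = M * 1 * Mᴴ := by rw [Matrix.mul_one]
  rw [hone, hone, smul_mul_mul_mul_conjTranspose, smul_mul_mul_mul_conjTranspose,
    mul_mul_mul_conjTranspose, mul_mul_mul_conjTranspose, Matrix.mul_one, Matrix.mul_one,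
    star_ofReal_inv_sqrt_mul_self hla.le]
  have congruent := congrArg (fun X => Ei * X * Eiᴴ)
    (edge_relation_frame hla.ne' hgij hTi hTj hTipos hTjpos hden)
  simpa only [Matrix.mul_sub, Matrix.sub_mul, Matrix.mul_smul, Matrix.smul_mul] using congruent

/-- Edge relation for the discrete Weierstrass-type representation of discrete
linear Weingarten surfaces of Bryant type (Lemma 5.1, item 1). -/
theorem stmt_0 (t lam alpha : ℝ) (hla : 1 - lam * alpha > 0)
    (gi gj : ℂ) (hgij : gj ≠ gi) (dg : ℂ) (hdg : dg = gj - gi)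
    (Ti Tj : ℝ)
    (hTi : Ti = 1 + t * ‖gi‖ ^ 2)
    (hTj : Tj = 1 + t * ‖gj‖ ^ 2)
    (hTipos : Ti > 0) (hTjpos : Tj > 0)
    (hden : ‖dg‖ ^ 2 * (1 - t) + Ti * Tj * (lam * alpha) ≠ 0)
    (Ei Ej Li Lj fi fj ni nj : Matrix (Fin 2) (Fin 2) ℂ)
    (hEi : Ei.det = 1)
    (hEj : Ej = (((Real.sqrt (1 - lam * alpha))⁻¹ : ℝ) : ℂ) •
      (Ei * !![1, dg; ((lam * alpha : ℝ) : ℂ) / dg, 1]))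
    (hLi : Li = !![0, ((Real.sqrt Ti : ℝ) : ℂ);
      -1 / ((Real.sqrt Ti : ℝ) : ℂ), -(t : ℂ) * (starRingEnd ℂ) gi / ((Real.sqrt Ti : ℝ) : ℂ)])
    (hLj : Lj = !![0, ((Real.sqrt Tj : ℝ) : ℂ);
      -1 / ((Real.sqrt Tj : ℝ) : ℂ), -(t : ℂ) * (starRingEnd ℂ) gj / ((Real.sqrt Tj : ℝ) : ℂ)])
    (hfi : fi = (Ei * Li) * (Ei * Li)ᴴ)
    (hfj : fj = (Ej * Lj) * (Ej * Lj)ᴴ)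
    (hni : ni = (Ei * Li) * !![(1 : ℂ), 0; 0, -1] * (Ei * Li)ᴴ)
    (hnj : nj = (Ej * Lj) * !![(1 : ℂ), 0; 0, -1] * (Ej * Lj)ᴴ)
    (κ : ℝ)
    (hκ : κ = (-(‖dg‖ ^ 2) * (1 + t) + Ti * Tj * (lam * alpha)) /
      (‖dg‖ ^ 2 * (1 - t) + Ti * Tj * (lam * alpha))) :
    nj - ni = -((κ : ℂ)) • (fj - fi) :=
  stmt_0_general t lam alpha hla gi gj hgij dg hdg Ti Tj hTi hTj hTipos hTjpos hden Ei Ej Li Lj fi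
    fj ni nj hEj hLi hLj hfi hfj hni hnj κ hκ
end

section
/- Let V be a real vector space, let u, w, v, x ∈ V, and let κ_{ij}, κ_{jk}, κ_{iℓ}, κ_{kℓ} be real numbers with κ_{jk} ≠ κ_{kℓ} and D := κ_{ij} − κ_{iℓ} − κ_{jk} + κ_{kℓ} ≠ 0. Assume u + w = v + x and κ_{ij}·u + κ_{jk}·w = κ_{iℓ}·v + κ_{kℓ}·x. Set df_{ik} := u + w, df_{jℓ} := v − u, dn_{ik} := −κ_{ij}·u − κ_{jk}·w, dn_{jℓ} := −κ_{iℓ}·v + κ_{ij}·u. Then in the exterior algebra of V: (1/4)·(df_{ik} ∧ dn_{jℓ} + dn_{ik} ∧ df_{jℓ}) = −H · (1/2)·(df_{ik} ∧ df_{jℓ}), where H = (κ_{ij}κ_{kℓ} − κ_{iℓ}κ_{jk})/D. -/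
/-!
Eliminating `x`, the two closing conditions say exactly that the vector
`C = (κij - κkℓ) u + (κjk - κkℓ) w - (κiℓ - κkℓ) v` vanishes. Expanding in `u, v, w`, the 2-form
`D (df_ik ∧ dn_jℓ + dn_ik ∧ df_jℓ) + 2 (κij κkℓ - κiℓ κjk) (df_ik ∧ df_jℓ)` factors as `C ∧ L`
with `L = (κiℓ - κjk) u + (κjk - κij) v + (κiℓ - κij) w`, hence is zero; dividing by `D` gives `H`.
-/

open ExteriorAlgebra

theorem ExteriorAlgebra.ι_mul_ι_swap {R M : Type*} [CommRing R] [AddCommGroup M] [Module R M]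
    (x y : M) : ι R y * ι R x = -(ι R x * ι R y) :=
  eq_neg_of_add_eq_zero_right (ι_add_mul_swap x y)

section Quadrilateral

variable {R V : Type*} [CommRing R] [AddCommGroup V] [Module R V]

theorem quad_closing_combination_eq_zero {u w v x : V} {kij kjk kil kkl : R}
    (hf : u + w = v + x) (hn : kij • u + kjk • w = kil • v + kkl • x) :
    (kij - kkl) • u + (kjk - kkl) • w - (kil - kkl) • v = 0 := by
  linear_combination (norm := module) hn - kkl • hf

theorem quad_mixedArea_defect_eq_ι_mul_ι (u v w : V) (kij kjk kil kkl : R) :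
    (kij - kil - kjk + kkl) • (ι R (u + w) * ι R (-(kil • v) + kij • u)
        + ι R (-(kij • u) - kjk • w) * ι R (v - u))
      + (2 * (kij * kkl - kil * kjk)) • (ι R (u + w) * ι R (v - u))
      = ι R ((kij - kkl) • u + (kjk - kkl) • w - (kil - kkl) • v)
          * ι R ((kil - kjk) • u + (kjk - kij) • v + (kil - kij) • w) := by
  simp only [map_add, map_sub, map_neg, map_smul, add_mul, mul_add, sub_mul, mul_sub, neg_mul,
    mul_neg, smul_mul_assoc, mul_smul_comm, ι_sq_zero, ι_mul_ι_swap v u, ι_mul_ι_swap w u,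
    ι_mul_ι_swap w v, smul_zero, smul_neg]
  module

end Quadrilateral

theorem stmt_2_general (V : Type*) [AddCommGroup V] [Module ℝ V]
    (u w v x : V) (kij kjk kil kkl : ℝ)
    (hD : kij - kil - kjk + kkl ≠ 0)
    (hf : u + w = v + x)
    (hn : kij • u + kjk • w = kil • v + kkl • x)
    (dfik dfjl dnik dnjl : V)
    (hdfik : dfik = u + w)
    (hdfjl : dfjl = v - u)
    (hdnik : dnik = -(kij • u) - kjk • w)
    (hdnjl : dnjl = -(kil • v) + kij • u)
    (H : ℝ)
    (hH : H = (kij * kkl - kil * kjk) / (kij - kil - kjk + kkl)) :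
    (1/4 : ℝ) • (ExteriorAlgebra.ι ℝ dfik * ExteriorAlgebra.ι ℝ dnjl
        + ExteriorAlgebra.ι ℝ dnik * ExteriorAlgebra.ι ℝ dfjl)
      = -H • ((1/2 : ℝ) • (ExteriorAlgebra.ι ℝ dfik * ExteriorAlgebra.ι ℝ dfjl)) := by
  subst hdfik hdfjl hdnik hdnjl hH
  have key := quad_mixedArea_defect_eq_ι_mul_ι (R := ℝ) u v w kij kjk kil kkl
  rw [quad_closing_combination_eq_zero hf hn, map_zero, zero_mul,
    add_eq_zero_iff_eq_neg] at key
  rw [← inv_smul_smul₀ hD (_ + _), key]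
  match_scalars
  field_simp
  ring

/-- Mean-curvature half of Lemma 5.3: the mixed area form of a quadrilateral
equals -H times the area form, with H given by the edge principal curvatures. -/
theorem stmt_2 (V : Type*) [AddCommGroup V] [Module ℝ V]
    (u w v x : V) (kij kjk kil kkl : ℝ)
    (hk : kjk ≠ kkl)
    (hD : kij - kil - kjk + kkl ≠ 0)
    (hf : u + w = v + x)
    (hn : kij • u + kjk • w = kil • v + kkl • x)
    (dfik dfjl dnik dnjl : V)
    (hdfik : dfik = u + w)
    (hdfjl : dfjl = v - u)
    (hdnik : dnik = -(kij • u) - kjk • w)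
    (hdnjl : dnjl = -(kil • v) + kij • u)
    (H : ℝ)
    (hH : H = (kij * kkl - kil * kjk) / (kij - kil - kjk + kkl)) :
    (1/4 : ℝ) • (ExteriorAlgebra.ι ℝ dfik * ExteriorAlgebra.ι ℝ dnjl
        + ExteriorAlgebra.ι ℝ dnik * ExteriorAlgebra.ι ℝ dfjl)
      = -H • ((1/2 : ℝ) • (ExteriorAlgebra.ι ℝ dfik * ExteriorAlgebra.ι ℝ dfjl)) :=
  stmt_2_general V u w v x kij kjk kil kkl hD hf hn dfik dfjl dnik dnjl hdfik hdfjl hdnik hdnjl H hH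
end

section
/- Let V be a real vector space, let u, w, v, x ∈ V, and let κ_{ij}, κ_{jk}, κ_{iℓ}, κ_{kℓ} be nonzero real numbers with κ_{jk} ≠ κ_{kℓ} and D := κ_{ij} − κ_{iℓ} − κ_{jk} + κ_{kℓ} ≠ 0. Assume u + w = v + x and κ_{ij}·u + κ_{jk}·w = κ_{iℓ}·v + κ_{kℓ}·x. Set df_{ik} := u + w, df_{jℓ} := v − u, dn_{ik} := −κ_{ij}·u − κ_{jk}·w, dn_{jℓ} := −κ_{iℓ}·v + κ_{ij}·u. Then in the exterior algebra of V: (1/2)·(dn_{ik} ∧ dn_{jℓ}) = K · (1/2)·(df_{ik} ∧ df_{jℓ}), where K = (κ_{ij}κ_{jk}κ_{kℓ}κ_{iℓ}/D)·(−1/κ_{ij} + 1/κ_{jk} + 1/κ_{iℓ} − 1/κ_{kℓ}). -/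
/-!
The closing conditions for `f` and `n` determine `w` as a combination of `u` and `v`
(this is where `κ_jk ≠ κ_kℓ` enters), so all four diagonals lie in the plane of `u` and `v`.
Each wedge product is then a determinant times `u ∧ v`, and `K` is the ratio of the two
determinants, `-D / (κ_jk - κ_kℓ)` for `f` and `-K D / (κ_jk - κ_kℓ)` for `n`.
-/

open ExteriorAlgebra

theorem ExteriorAlgebra.ι_smul_add_smul_mul_ι_smul_add_smul {R M : Type*} [CommRing R]
    [AddCommGroup M] [Module R M] (u v : M) (a b c d : R) :
    ι R (a • u + b • v) * ι R (c • u + d • v) = (a * d - b * c) • (ι R u * ι R v) := by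
  have hvu : ι R v * ι R u = -(ι R u * ι R v) := eq_neg_of_add_eq_zero_left (ι_add_mul_swap v u)
  simp only [map_add, map_smul, add_mul, mul_add, smul_mul_assoc, mul_smul_comm, ι_sq_zero, hvu,
    smul_zero, smul_neg]
  module

theorem eq_smul_add_smul_of_closing {𝕜 V : Type*} [Field 𝕜] [AddCommGroup V] [Module 𝕜 V]
    {u w v x : V} {kij kjk kil kkl : 𝕜} (hk : kjk ≠ kkl) (hf : u + w = v + x)
    (hn : kij • u + kjk • w = kil • v + kkl • x) :
    w = ((kkl - kij) / (kjk - kkl)) • u + ((kil - kkl) / (kjk - kkl)) • v := by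
  have hc : kjk - kkl ≠ 0 := sub_ne_zero.mpr hk
  obtain rfl : x = u + w - v := by rw [hf]; abel
  have hw : (kjk - kkl) • w = (kkl - kij) • u + (kil - kkl) • v := by
    linear_combination (norm := module) hn
  rw [← inv_smul_smul₀ hc w, hw]
  module

/-- Gaussian-curvature half of Lemma 5.3: the area form of the Gauss map of a
quadrilateral equals K times the area form, with K given by the edge principal
curvatures. -/
theorem stmt_3 (V : Type*) [AddCommGroup V] [Module ℝ V]
    (u w v x : V) (kij kjk kil kkl : ℝ)
    (hkij : kij ≠ 0) (hkjk : kjk ≠ 0) (hkil : kil ≠ 0) (hkkl : kkl ≠ 0)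
    (hk : kjk ≠ kkl)
    (hD : kij - kil - kjk + kkl ≠ 0)
    (hf : u + w = v + x)
    (hn : kij • u + kjk • w = kil • v + kkl • x)
    (dfik dfjl dnik dnjl : V)
    (hdfik : dfik = u + w)
    (hdfjl : dfjl = v - u)
    (hdnik : dnik = -(kij • u) - kjk • w)
    (hdnjl : dnjl = -(kil • v) + kij • u)
    (K : ℝ)
    (hK : K = (kij * kjk * kkl * kil / (kij - kil - kjk + kkl)) *
      (-(1 / kij) + 1 / kjk + 1 / kil - 1 / kkl)) :
    (1/2 : ℝ) • (ExteriorAlgebra.ι ℝ dnik * ExteriorAlgebra.ι ℝ dnjl)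
      = K • ((1/2 : ℝ) • (ExteriorAlgebra.ι ℝ dfik * ExteriorAlgebra.ι ℝ dfjl)) := by
  set s := (kkl - kij) / (kjk - kkl) with hs
  set t := (kil - kkl) / (kjk - kkl) with ht
  obtain rfl : w = s • u + t • v := eq_smul_add_smul_of_closing hk hf hn
  have hdfik' : dfik = (1 + s) • u + t • v := by rw [hdfik]; module
  have hdfjl' : dfjl = (-1 : ℝ) • u + (1 : ℝ) • v := by rw [hdfjl]; module
  have hdnik' : dnik = (-kij - kjk * s) • u + (-(kjk * t)) • v := by rw [hdnik]; module
  have hdnjl' : dnjl = kij • u + (-kil) • v := by rw [hdnjl]; module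
  rw [hdfik', hdfjl', hdnik', hdnjl', ι_smul_add_smul_mul_ι_smul_add_smul,
    ι_smul_add_smul_mul_ι_smul_add_smul]
  match_scalars
  rw [hK, hs, ht]
  field_simp [sub_ne_zero.mpr hk]
  ring
end

section
/- Let κ_{ij}, κ_{jk}, κ_{iℓ}, κ_{kℓ} be nonzero real numbers such that D := κ_{ij} − κ_{iℓ} − κ_{jk} + κ_{kℓ} ≠ 0 and D' := 1/κ_{ij} − 1/κ_{iℓ} − 1/κ_{jk} + 1/κ_{kℓ} ≠ 0. Define H := (κ_{ij}κ_{kℓ} − κ_{iℓ}κ_{jk})/D, K := (κ_{ij}κ_{jk}κ_{kℓ}κ_{iℓ}/D)·(−1/κ_{ij} + 1/κ_{jk} + 1/κ_{iℓ} − 1/κ_{kℓ}), and define H' and K' by the same two formulas with each κ replaced by its reciprocal 1/κ. Then K ≠ 0, K' = 1/K, and H' = H/K. -/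
/-!
Write `D = κ_ij - κ_iℓ - κ_jk + κ_kℓ`, `D'` for the same alternating sum of the reciprocals and
`P = κ_ij κ_jk κ_kℓ κ_iℓ`. The second factor of `K` is `-D'`, so `K = -P D' / D`; replacing every
`κ` by `1/κ` swaps `D` and `D'` and inverts `P`, whence `K' = -D / (P D') = 1/K`. Likewise
`κ_ij κ_kℓ - κ_iℓ κ_jk` becomes its negative divided by `P`, which gives `H' = H/K`.
-/

namespace DiscreteSurface

variable {𝕜 : Type*} [Field 𝕜]

def faceMeanCurvature (kij kjk kil kkl : 𝕜) : 𝕜 :=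
  (kij * kkl - kil * kjk) / (kij - kil - kjk + kkl)

def faceGaussCurvature (kij kjk kil kkl : 𝕜) : 𝕜 :=
  (kij * kjk * kkl * kil / (kij - kil - kjk + kkl)) *
    (-(1 / kij) + 1 / kjk + 1 / kil - 1 / kkl)

theorem faceGaussCurvature_eq (kij kjk kil kkl : 𝕜) :
    faceGaussCurvature kij kjk kil kkl =
      -(kij * kjk * kkl * kil) * (1 / kij - 1 / kil - 1 / kjk + 1 / kkl) /
        (kij - kil - kjk + kkl) := by
  unfold faceGaussCurvature
  ring

-- No side conditions: with `x / 0 = 0` both sides vanish as soon as `D`, `D'` or `P` does.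
theorem faceGaussCurvature_inv (kij kjk kil kkl : 𝕜) :
    faceGaussCurvature (1 / kij) (1 / kjk) (1 / kil) (1 / kkl) =
      1 / faceGaussCurvature kij kjk kil kkl := by
  rw [faceGaussCurvature_eq, faceGaussCurvature_eq]
  simp only [one_div_one_div]
  field_simp

variable {kij kjk kil kkl : 𝕜}

theorem faceGaussCurvature_ne_zero (hkij : kij ≠ 0) (hkjk : kjk ≠ 0) (hkil : kil ≠ 0)
    (hkkl : kkl ≠ 0) (hD : kij - kil - kjk + kkl ≠ 0)
    (hD' : 1 / kij - 1 / kil - 1 / kjk + 1 / kkl ≠ 0) :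
    faceGaussCurvature kij kjk kil kkl ≠ 0 := by
  rw [faceGaussCurvature_eq]
  have hP : kij * kjk * kkl * kil ≠ 0 := by simp [*]
  exact div_ne_zero (mul_ne_zero (neg_ne_zero.mpr hP) hD') hD

theorem faceMeanCurvature_inv (hkij : kij ≠ 0) (hkjk : kjk ≠ 0) (hkil : kil ≠ 0)
    (hkkl : kkl ≠ 0) (hD : kij - kil - kjk + kkl ≠ 0) :
    faceMeanCurvature (1 / kij) (1 / kjk) (1 / kil) (1 / kkl) =
      faceMeanCurvature kij kjk kil kkl / faceGaussCurvature kij kjk kil kkl := by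
  rw [faceGaussCurvature_eq]
  unfold faceMeanCurvature
  field_simp
  ring

end DiscreteSurface

open DiscreteSurface in
/-- Equation (5.4): the face curvatures of the Gauss map (whose edge principal
curvatures are the reciprocals) satisfy K' = 1/K and H' = H/K. -/
theorem stmt_4 (kij kjk kil kkl : ℝ)
    (hkij : kij ≠ 0) (hkjk : kjk ≠ 0) (hkil : kil ≠ 0) (hkkl : kkl ≠ 0)
    (hD : kij - kil - kjk + kkl ≠ 0)
    (hD' : 1 / kij - 1 / kil - 1 / kjk + 1 / kkl ≠ 0)
    (H K H' K' : ℝ)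
    (hH : H = (kij * kkl - kil * kjk) / (kij - kil - kjk + kkl))
    (hK : K = (kij * kjk * kkl * kil / (kij - kil - kjk + kkl)) *
      (-(1 / kij) + 1 / kjk + 1 / kil - 1 / kkl))
    (hH' : H' = ((1 / kij) * (1 / kkl) - (1 / kil) * (1 / kjk)) /
      (1 / kij - 1 / kil - 1 / kjk + 1 / kkl))
    (hK' : K' = ((1 / kij) * (1 / kjk) * (1 / kkl) * (1 / kil) /
        (1 / kij - 1 / kil - 1 / kjk + 1 / kkl)) *
      (-(1 / (1 / kij)) + 1 / (1 / kjk) + 1 / (1 / kil) - 1 / (1 / kkl))) :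
    K ≠ 0 ∧ K' = 1 / K ∧ H' = H / K := by
  subst hH hK hH' hK'
  exact ⟨faceGaussCurvature_ne_zero hkij hkjk hkil hkkl hD hD',
    faceGaussCurvature_inv kij kjk kil kkl, faceMeanCurvature_inv hkij hkjk hkil hkkl hD⟩
end

section
/- Let t, λ, α, β be real numbers and let g_i, g_j, g_k, g_ℓ be complex numbers with g_i ≠ g_j, g_j ≠ g_k, g_k ≠ g_ℓ, g_ℓ ≠ g_i, satisfying the cross-ratio condition ((g_i − g_j)(g_k − g_ℓ))/((g_j − g_k)(g_ℓ − g_i)) = α/β (with β ≠ 0). Write T_m := 1 + t|g_m|² for each vertex m, and define on each edge κ_{mn} := (−|g_n − g_m|²(1+t) + T_m T_n λ α_{mn})/(|g_n − g_m|²(1−t) + T_m T_n λ α_{mn}), where α_{ij} = α_{ℓk} = α and α_{iℓ} = α_{jk} = β; assume all four denominators are nonzero and all four κ's are nonzero. Set κ'_{mn} := 1/κ_{mn}, assume D' := κ'_{ij} − κ'_{iℓ} − κ'_{jk} + κ'_{kℓ} ≠ 0, and define H_n := (κ'_{ij}κ'_{kℓ} − κ'_{iℓ}κ'_{jk})/D'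 and K_n := (κ'_{ij}κ'_{jk}κ'_{kℓ}κ'_{iℓ}/D')·(−1/κ'_{ij} + 1/κ'_{jk} + 1/κ'_{iℓ} − 1/κ'_{kℓ}). Then 2t(H_n − 1) − (1 + t)(K_n − 1) = 0. -/
/-!
For an edge with `κ = (a - A(1+t)) / (A(1-t) + a)`, where `A = |g_n - g_m|²` and
`a = T_m T_n λ α_{mn}`, the reciprocal `κ' = 1/κ` satisfies
`((1+t)κ' + (1-t)) : (κ' - 1) = a : A`. The absolute value of the cross-ratio condition says that
the product of the ratios `a : A` over the edges `ij, kℓ` equals that over `iℓ, jk` (the factors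
`T_m` occur once per vertex on both sides). Cleared of denominators, this product identity for the
`κ'` is exactly twice the numerator of `2t(H_n - 1) - (1+t)(K_n - 1)` over `D'`.
-/

noncomputable def faceMeanCurvature (kij kjk kkl kil : ℝ) : ℝ :=
  (kij * kkl - kil * kjk) / (kij - kil - kjk + kkl)

noncomputable def faceGaussCurvature (kij kjk kkl kil : ℝ) : ℝ :=
  (kij * kjk * kkl * kil / (kij - kil - kjk + kkl)) *
    (-(1 / kij) + 1 / kjk + 1 / kil - 1 / kkl)

theorem bianchi_relation_of_edge_identity {t kij kjk kkl kil : ℝ}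
    (hij : kij ≠ 0) (hjk : kjk ≠ 0) (hkl : kkl ≠ 0) (hil : kil ≠ 0)
    (hD : kij - kil - kjk + kkl ≠ 0)
    (h : ((1 + t) * kij + (1 - t)) * ((1 + t) * kkl + (1 - t)) * ((kjk - 1) * (kil - 1)) =
      ((1 + t) * kjk + (1 - t)) * ((1 + t) * kil + (1 - t)) * ((kij - 1) * (kkl - 1))) :
    2 * t * (faceMeanCurvature kij kjk kkl kil - 1) -
      (1 + t) * (faceGaussCurvature kij kjk kkl kil - 1) = 0 := by
  unfold faceMeanCurvature faceGaussCurvature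
  field_simp
  linear_combination (1 / 2 : ℝ) * h

theorem exists_one_div_curvature_eq {t A a κ : ℝ}
    (hκ : κ = (-A * (1 + t) + a) / (A * (1 - t) + a)) (hκ0 : κ ≠ 0) :
    ∃ n ≠ 0, (1 + t) * (1 / κ) + (1 - t) = 2 * a / n ∧ 1 / κ - 1 = 2 * A / n := by
  obtain ⟨hn, -⟩ := div_ne_zero_iff.1 (hκ ▸ hκ0)
  refine ⟨-A * (1 + t) + a, hn, ?_, ?_⟩ <;> rw [hκ, one_div_div, eq_div_iff hn]
  · rw [add_mul, mul_assoc, div_mul_cancel₀ _ hn]; ring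
  · rw [sub_mul, div_mul_cancel₀ _ hn]; ring

theorem norm_sq_mul_eq_of_crossRatio_eq {gi gj gk gl : ℂ} {alpha beta : ℝ}
    (hjk : gj ≠ gk) (hli : gl ≠ gi) (hbeta : beta ≠ 0)
    (hcr : ((gi - gj) * (gk - gl)) / ((gj - gk) * (gl - gi)) = ((alpha / beta : ℝ) : ℂ)) :
    ‖gj - gi‖ ^ 2 * ‖gk - gl‖ ^ 2 * beta ^ 2 = ‖gk - gj‖ ^ 2 * ‖gl - gi‖ ^ 2 * alpha ^ 2 := by
  have hden : (gj - gk) * (gl - gi) ≠ 0 := mul_ne_zero (sub_ne_zero.2 hjk) (sub_ne_zero.2 hli)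
  rw [div_eq_iff hden, Complex.ofReal_div, div_mul_eq_mul_div,
    eq_div_iff (Complex.ofReal_ne_zero.2 hbeta)] at hcr
  have := congrArg (‖·‖ ^ 2) hcr
  simp only [norm_mul, mul_pow, Complex.norm_real, Real.norm_eq_abs, sq_abs] at this
  rw [norm_sub_rev gj gi, norm_sub_rev gk gj]
  linear_combination this

theorem stmt_6_general (t lam alpha beta : ℝ) (gi gj gk gl : ℂ)
    (hjk : gj ≠ gk) (hli : gl ≠ gi)
    (hbeta : beta ≠ 0)
    (hcr : ((gi - gj) * (gk - gl)) / ((gj - gk) * (gl - gi)) = ((alpha / beta : ℝ) : ℂ))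
    (Ti Tj Tk Tl : ℝ)
    (kij kjk kkl kil : ℝ)
    (hkij : kij = (-(‖gj - gi‖ ^ 2) * (1 + t) + Ti * Tj * (lam * alpha)) /
      (‖gj - gi‖ ^ 2 * (1 - t) + Ti * Tj * (lam * alpha)))
    (hkkl : kkl = (-(‖gk - gl‖ ^ 2) * (1 + t) + Tl * Tk * (lam * alpha)) /
      (‖gk - gl‖ ^ 2 * (1 - t) + Tl * Tk * (lam * alpha)))
    (hkil : kil = (-(‖gl - gi‖ ^ 2) * (1 + t) + Ti * Tl * (lam * beta)) /
      (‖gl - gi‖ ^ 2 * (1 - t) + Ti * Tl * (lam * beta)))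
    (hkjk : kjk = (-(‖gk - gj‖ ^ 2) * (1 + t) + Tj * Tk * (lam * beta)) /
      (‖gk - gj‖ ^ 2 * (1 - t) + Tj * Tk * (lam * beta)))
    (hkij0 : kij ≠ 0) (hkjk0 : kjk ≠ 0) (hkil0 : kil ≠ 0) (hkkl0 : kkl ≠ 0)
    (kij' kjk' kkl' kil' : ℝ)
    (hkij' : kij' = 1 / kij) (hkjk' : kjk' = 1 / kjk)
    (hkkl' : kkl' = 1 / kkl) (hkil' : kil' = 1 / kil)
    (hD' : kij' - kil' - kjk' + kkl' ≠ 0)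
    (Hn Kn : ℝ)
    (hHn : Hn = (kij' * kkl' - kil' * kjk') / (kij' - kil' - kjk' + kkl'))
    (hKn : Kn = (kij' * kjk' * kkl' * kil' / (kij' - kil' - kjk' + kkl')) *
      (-(1 / kij') + 1 / kjk' + 1 / kil' - 1 / kkl')) :
    2 * t * (Hn - 1) - (1 + t) * (Kn - 1) = 0 := by
  have hnorm := norm_sq_mul_eq_of_crossRatio_eq hjk hli hbeta hcr
  obtain ⟨nij, hnij, haij, hAij⟩ := exists_one_div_curvature_eq hkij hkij0
  obtain ⟨njk, hnjk, hajk, hAjk⟩ := exists_one_div_curvature_eq hkjk hkjk0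
  obtain ⟨nkl, hnkl, hakl, hAkl⟩ := exists_one_div_curvature_eq hkkl hkkl0
  obtain ⟨nil, hnil, hail, hAil⟩ := exists_one_div_curvature_eq hkil hkil0
  subst hHn hKn hkij' hkjk' hkkl' hkil'
  refine bianchi_relation_of_edge_identity (one_div_ne_zero hkij0) (one_div_ne_zero hkjk0)
    (one_div_ne_zero hkkl0) (one_div_ne_zero hkil0) hD' ?_
  rw [haij, hajk, hakl, hail, hAij, hAjk, hAkl, hAil]
  field_simp
  linear_combination (-(Ti * Tj * Tk * Tl * lam ^ 2)) * hnorm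

/-- Second half of Lemma 5.5: the Gauss map in de Sitter 3-space of a discrete
surface with Weierstrass-type representation, whose edge principal curvatures
are the reciprocals, satisfies the linear Weingarten relation of Bianchi type
2t(H_n-1) - (1+t)(K_n-1) = 0. -/
theorem stmt_6 (t lam alpha beta : ℝ) (gi gj gk gl : ℂ)
    (hij : gi ≠ gj) (hjk : gj ≠ gk) (hkl : gk ≠ gl) (hli : gl ≠ gi)
    (hbeta : beta ≠ 0)
    (hcr : ((gi - gj) * (gk - gl)) / ((gj - gk) * (gl - gi)) = ((alpha / beta : ℝ) : ℂ))
    (Ti Tj Tk Tl : ℝ)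
    (hTi : Ti = 1 + t * ‖gi‖ ^ 2)
    (hTj : Tj = 1 + t * ‖gj‖ ^ 2)
    (hTk : Tk = 1 + t * ‖gk‖ ^ 2)
    (hTl : Tl = 1 + t * ‖gl‖ ^ 2)
    (kij kjk kkl kil : ℝ)
    (hdij : ‖gj - gi‖ ^ 2 * (1 - t) + Ti * Tj * (lam * alpha) ≠ 0)
    (hdlk : ‖gk - gl‖ ^ 2 * (1 - t) + Tl * Tk * (lam * alpha) ≠ 0)
    (hdil : ‖gl - gi‖ ^ 2 * (1 - t) + Ti * Tl * (lam * beta) ≠ 0)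
    (hdjk : ‖gk - gj‖ ^ 2 * (1 - t) + Tj * Tk * (lam * beta) ≠ 0)
    (hkij : kij = (-(‖gj - gi‖ ^ 2) * (1 + t) + Ti * Tj * (lam * alpha)) /
      (‖gj - gi‖ ^ 2 * (1 - t) + Ti * Tj * (lam * alpha)))
    (hkkl : kkl = (-(‖gk - gl‖ ^ 2) * (1 + t) + Tl * Tk * (lam * alpha)) /
      (‖gk - gl‖ ^ 2 * (1 - t) + Tl * Tk * (lam * alpha)))
    (hkil : kil = (-(‖gl - gi‖ ^ 2) * (1 + t) + Ti * Tl * (lam * beta)) /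
      (‖gl - gi‖ ^ 2 * (1 - t) + Ti * Tl * (lam * beta)))
    (hkjk : kjk = (-(‖gk - gj‖ ^ 2) * (1 + t) + Tj * Tk * (lam * beta)) /
      (‖gk - gj‖ ^ 2 * (1 - t) + Tj * Tk * (lam * beta)))
    (hkij0 : kij ≠ 0) (hkjk0 : kjk ≠ 0) (hkil0 : kil ≠ 0) (hkkl0 : kkl ≠ 0)
    (kij' kjk' kkl' kil' : ℝ)
    (hkij' : kij' = 1 / kij) (hkjk' : kjk' = 1 / kjk)
    (hkkl' : kkl' = 1 / kkl) (hkil' : kil' = 1 / kil)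
    (hD' : kij' - kil' - kjk' + kkl' ≠ 0)
    (Hn Kn : ℝ)
    (hHn : Hn = (kij' * kkl' - kil' * kjk') / (kij' - kil' - kjk' + kkl'))
    (hKn : Kn = (kij' * kjk' * kkl' * kil' / (kij' - kil' - kjk' + kkl')) *
      (-(1 / kij') + 1 / kjk' + 1 / kil' - 1 / kkl')) :
    2 * t * (Hn - 1) - (1 + t) * (Kn - 1) = 0 :=
  stmt_6_general t lam alpha beta gi gj gk gl hjk hli hbeta hcr Ti Tj Tk Tl kij kjk kkl kil hkij
    hkkl hkil hkjk hkij0 hkjk0 hkil0 hkkl0 kij' kjk' kkl' kil' hkij' hkjk' hkkl' hkil' hD' Hn Kn hHn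
    hKn
end

section
/- Let t, θ, H, K be real numbers satisfying 2t(H − 1) + (1 − t)(K − 1) = 0, and assume Δ := cosh²θ − H·sinh(2θ) + K·sinh²θ ≠ 0. Define K^θ := (K·cosh²θ − H·sinh(2θ) + sinh²θ)/Δ and H^θ := −((K + 1)·sinh(2θ) − 2H·cosh(2θ))/(2Δ). Then, with T := e^{−2θ}·t, one has 2T(H^θ − 1) + (1 − T)(K^θ − 1) = 0. -/
/-!
Both curvatures of the parallel face become simple after subtracting 1: with
Δ = cosh²θ − H sinh 2θ + K sinh²θ one has Δ (K^θ − 1) = K − 1 and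
Δ (H^θ − 1) = (H − 1) e^{2θ} − (K − 1) sinh θ e^θ. Since 2 sinh θ e^θ = e^{2θ} − 1,
the Bryant-type expression for (T, H^θ, K^θ) with T = e^{−2θ} t is 1/Δ times the
one for (t, H, K).
-/

open Real

namespace Hyperbolic

def IsBryantLinearWeingarten (t H K : ℝ) : Prop :=
  2 * t * (H - 1) + (1 - t) * (K - 1) = 0

noncomputable def parallelDenom (θ H K : ℝ) : ℝ :=
  cosh θ ^ 2 - H * sinh (2 * θ) + K * sinh θ ^ 2

noncomputable def parallelGaussCurv (θ H K : ℝ) : ℝ :=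
  (K * cosh θ ^ 2 - H * sinh (2 * θ) + sinh θ ^ 2) / parallelDenom θ H K

noncomputable def parallelMeanCurv (θ H K : ℝ) : ℝ :=
  -((K + 1) * sinh (2 * θ) - 2 * H * cosh (2 * θ)) / (2 * parallelDenom θ H K)

variable {θ H K : ℝ}

lemma parallelGaussCurv_sub_one (hΔ : parallelDenom θ H K ≠ 0) :
    parallelGaussCurv θ H K - 1 = (K - 1) / parallelDenom θ H K := by
  rw [parallelGaussCurv, div_sub_one hΔ, parallelDenom]
  congr 1
  linear_combination (K - 1) * cosh_sq_sub_sinh_sq θ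

lemma parallelMeanCurv_sub_one (hΔ : parallelDenom θ H K ≠ 0) :
    parallelMeanCurv θ H K - 1 =
      ((H - 1) * exp (2 * θ) - (K - 1) * sinh θ * exp θ) / parallelDenom θ H K := by
  rw [parallelMeanCurv, eq_div_iff hΔ]
  field_simp
  rw [parallelDenom, sinh_two_mul, cosh_two_mul, two_mul θ, exp_add, ← cosh_add_sinh]
  ring

lemma two_mul_sinh_mul_exp (x : ℝ) : 2 * sinh x * exp x = exp (2 * x) - 1 := by
  rw [sinh_eq, exp_neg, two_mul x, exp_add]
  field_simp

theorem IsBryantLinearWeingarten.parallel {t : ℝ} (h : IsBryantLinearWeingarten t H K)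
    (hΔ : parallelDenom θ H K ≠ 0) :
    IsBryantLinearWeingarten (exp (-(2 * θ)) * t) (parallelMeanCurv θ H K)
      (parallelGaussCurv θ H K) := by
  unfold IsBryantLinearWeingarten at h ⊢
  rw [parallelMeanCurv_sub_one hΔ, parallelGaussCurv_sub_one hΔ, exp_neg]
  field_simp
  linear_combination exp (2 * θ) * h - t * (K - 1) * two_mul_sinh_mul_exp θ

end Hyperbolic

/-- Parallel surfaces of discrete Bryant-type linear Weingarten surfaces in
hyperbolic 3-space are again of Bryant type, with parameter T = e^{-2θ} t
(end of Section 5). -/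
theorem stmt_7 (t θ H K : ℝ)
    (hLW : 2 * t * (H - 1) + (1 - t) * (K - 1) = 0)
    (hΔ : Real.cosh θ ^ 2 - H * Real.sinh (2 * θ) + K * Real.sinh θ ^ 2 ≠ 0)
    (Kθ Hθ : ℝ)
    (hKθ : Kθ = (K * Real.cosh θ ^ 2 - H * Real.sinh (2 * θ) + Real.sinh θ ^ 2) /
      (Real.cosh θ ^ 2 - H * Real.sinh (2 * θ) + K * Real.sinh θ ^ 2))
    (hHθ : Hθ = -((K + 1) * Real.sinh (2 * θ) - 2 * H * Real.cosh (2 * θ)) /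
      (2 * (Real.cosh θ ^ 2 - H * Real.sinh (2 * θ) + K * Real.sinh θ ^ 2))) :
    2 * (Real.exp (-(2 * θ)) * t) * (Hθ - 1) +
      (1 - Real.exp (-(2 * θ)) * t) * (Kθ - 1) = 0 := by
  subst hKθ hHθ
  exact Hyperbolic.IsBryantLinearWeingarten.parallel hLW hΔ
end

section
/- Let g_i, g_* be complex numbers with g_* ≠ g_i, and let α be a nonzero real number. Define df := (α/2)·(Re((1 − g_* g_i)/(g_* − g_i)), Re(i(1 + g_* g_i)/(g_* − g_i)), Re((g_* + g_i)/(g_* − g_i))) ∈ ℝ³, and define the stereographic Gauss map n(w) := (2 Re w, 2 Im w, |w|² − 1)/(1 + |w|²) ∈ ℝ³ for w ∈ ℂ. Then n(g_*) − n(g_i) = −κ·df, where κ := −4|g_* − g_i|²/(α·(1 + |g_i|²)(1 + |g_*|²)). -/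
/-!
Multiplying the edge vector by `|g_* - g_i|²` clears the denominators `g_* - g_i`, since
`z / w · |w|² = z · conj w`. Both sides of the relation then become polynomial in the real and
imaginary parts of `g_i, g_*`, and after clearing the denominators `1 + |g|²` of the Gauss map
the relation is a polynomial identity.
-/

open Complex ComplexConjugate

lemma Complex.div_mul_normSq (z w : ℂ) : z / w * (normSq w : ℂ) = z * conj w := by
  rcases eq_or_ne w 0 with rfl | hw
  · simp
  · rw [← mul_conj, div_mul_eq_mul_div, mul_div_assoc, mul_div_cancel_left₀ _ hw]

lemma Complex.sq_norm_mul_div_re (z w : ℂ) : ‖w‖ ^ 2 * (z / w).re = (z * conj w).re := by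
  rw [Complex.sq_norm, mul_comm, ← re_mul_ofReal, div_mul_normSq]

noncomputable def stereoGauss (w : ℂ) : ℝ × ℝ × ℝ :=
  (1 + ‖w‖ ^ 2)⁻¹ • (2 * w.re, 2 * w.im, ‖w‖ ^ 2 - 1)

/-- The edge vector `f̂_* - f̂_i` of the discrete Weierstrass representation, divided by
`α / 2`. -/
noncomputable def weierstrassEdge (gs gi : ℂ) : ℝ × ℝ × ℝ :=
  (((1 - gs * gi) / (gs - gi)).re, (I * (1 + gs * gi) / (gs - gi)).re,
    ((gs + gi) / (gs - gi)).re)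

lemma sq_norm_smul_weierstrassEdge (gs gi : ℂ) :
    ‖gs - gi‖ ^ 2 • weierstrassEdge gs gi =
      (((1 - gs * gi) * conj (gs - gi)).re, (I * (1 + gs * gi) * conj (gs - gi)).re,
        ((gs + gi) * conj (gs - gi)).re) := by
  simp only [weierstrassEdge, Prod.smul_mk, smul_eq_mul, sq_norm_mul_div_re]

lemma stereoGauss_sub (gs gi : ℂ) :
    stereoGauss gs - stereoGauss gi =
      (2 / ((1 + ‖gi‖ ^ 2) * (1 + ‖gs‖ ^ 2))) •
        (((1 - gs * gi) * conj (gs - gi)).re, (I * (1 + gs * gi) * conj (gs - gi)).re,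
          ((gs + gi) * conj (gs - gi)).re) := by
  have hi : 1 + ‖gi‖ ^ 2 ≠ 0 := by positivity
  have hs : 1 + ‖gs‖ ^ 2 ≠ 0 := by positivity
  simp only [Complex.sq_norm, normSq_apply] at hi hs
  simp only [stereoGauss, Complex.sq_norm, normSq_apply, Prod.smul_mk, Prod.mk_sub_mk,
    smul_eq_mul, Prod.mk.injEq, mul_re, mul_im, sub_re, sub_im, add_re, add_im, conj_re,
    conj_im, one_re, one_im, I_re, I_im]
  refine ⟨?_, ?_, ?_⟩ <;> field_simp <;> ring

theorem stmt_12_general (gi gs : ℂ) (α : ℝ) (hα : α ≠ 0)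
    (df : ℝ × ℝ × ℝ)
    (hdf : df = (α / 2) • ((((1 - gs * gi) / (gs - gi)).re,
      (Complex.I * (1 + gs * gi) / (gs - gi)).re,
      ((gs + gi) / (gs - gi)).re)))
    (n : ℂ → ℝ × ℝ × ℝ)
    (hn : ∀ w : ℂ, n w = ((1 + ‖w‖ ^ 2)⁻¹) •
      (2 * w.re, 2 * w.im, ‖w‖ ^ 2 - 1))
    (κ : ℝ)
    (hκ : κ = -(4 * ‖gs - gi‖ ^ 2) /
      (α * (1 + ‖gi‖ ^ 2) * (1 + ‖gs‖ ^ 2))) :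
    n gs - n gi = -κ • df := by
  have hn' : n = stereoGauss := funext hn
  have hdf' : df = (α / 2) • weierstrassEdge gs gi := hdf
  have hscalar :
      -κ * (α / 2) = 2 / ((1 + ‖gi‖ ^ 2) * (1 + ‖gs‖ ^ 2)) * ‖gs - gi‖ ^ 2 := by
    rw [hκ]
    field_simp
    ring
  rw [hn', hdf', smul_smul, hscalar, ← smul_smul, sq_norm_smul_weierstrassEdge, stereoGauss_sub]

/-- Edge principal-curvature relation for discrete minimal surfaces in
Euclidean 3-space (Section 7.2): the difference of the stereographic Gauss map
along an edge is -κ times the edge vector of the Weierstrass representation. -/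
theorem stmt_12 (gi gs : ℂ) (hg : gs ≠ gi) (α : ℝ) (hα : α ≠ 0)
    (df : ℝ × ℝ × ℝ)
    (hdf : df = (α / 2) • ((((1 - gs * gi) / (gs - gi)).re,
      (Complex.I * (1 + gs * gi) / (gs - gi)).re,
      ((gs + gi) / (gs - gi)).re)))
    (n : ℂ → ℝ × ℝ × ℝ)
    (hn : ∀ w : ℂ, n w = ((1 + ‖w‖ ^ 2)⁻¹) •
      (2 * w.re, 2 * w.im, ‖w‖ ^ 2 - 1))
    (κ : ℝ)
    (hκ : κ = -(4 * ‖gs - gi‖ ^ 2) /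
      (α * (1 + ‖gi‖ ^ 2) * (1 + ‖gs‖ ^ 2))) :
    n gs - n gi = -κ • df :=
  stmt_12_general gi gs α hα df hdf n hn κ hκ
end

section
/- Let g_i, g_* be complex numbers with g_* ≠ g_i, |g_i| ≠ 1, |g_*| ≠ 1, and let α be a nonzero real number. Define df := (α/2)·(Re((1 + g_* g_i)/(g_* − g_i)), Re(i(1 − g_* g_i)/(g_* − g_i)), −Re((g_* + g_i)/(g_* − g_i))) ∈ ℝ³, and define the hyperboloid Gauss map n(w) := (2 Re w, 2 Im w, −(1 + |w|²))/(1 − |w|²) ∈ ℝ³ for w ∈ ℂ with |w| ≠ 1. Then n(g_*) − n(g_i) = −κ·df, where κ := −4|g_* − g_i|²/(α·(1 − |g_i|²)(1 − |g_*|²)). -/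
/-!
With `d = g_* - g_i`, the edge vector is `α / (2|d|²)` times the real parts of `(1 + g_* g_i) d̄`,
`i (1 - g_* g_i) d̄` and `-(g_* + g_i) d̄`. These polynomials are, componentwise, half of
`(1 - |g_i|²) N(g_*) - (1 - |g_*|²) N(g_i)`, where `N(w) = (2 Re w, 2 Im w, -(1 + |w|²))` is the
numerator of the Gauss map; dividing by `(1 - |g_i|²)(1 - |g_*|²)` gives the claim.
-/

open Complex ComplexConjugate

lemma Complex.re_div_eq_re_mul_conj_div_sq_norm (z w : ℂ) :
    (z / w).re = (z * conj w).re / ‖w‖ ^ 2 := by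
  rw [div_re, mul_re, conj_re, conj_im, Complex.sq_norm]
  ring

lemma weierstrass_edge_vector_eq_inv_sq_norm_smul (a b : ℂ) :
    ((((1 + a * b) / (a - b)).re, (I * (1 - a * b) / (a - b)).re,
        -((a + b) / (a - b)).re) : ℝ × ℝ × ℝ) =
      (‖a - b‖ ^ 2)⁻¹ • (((1 + a * b) * conj (a - b)).re,
        (I * (1 - a * b) * conj (a - b)).re, -((a + b) * conj (a - b)).re) := by
  simp only [re_div_eq_re_mul_conj_div_sq_norm, Prod.smul_mk, smul_eq_mul, ← div_eq_inv_mul,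
    neg_div]

lemma weierstrass_edge_numerator_eq_half_smul_sub (a b : ℂ) :
    (((1 + a * b) * conj (a - b)).re, (I * (1 - a * b) * conj (a - b)).re,
        -((a + b) * conj (a - b)).re) =
      (2⁻¹ : ℝ) • ((1 - ‖b‖ ^ 2) • (2 * a.re, 2 * a.im, -(1 + ‖a‖ ^ 2)) -
        (1 - ‖a‖ ^ 2) • (2 * b.re, 2 * b.im, -(1 + ‖b‖ ^ 2)) : ℝ × ℝ × ℝ) := by
  simp only [Complex.sq_norm, normSq_apply, Prod.smul_mk, Prod.mk_sub_mk, smul_eq_mul,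
    Prod.mk.injEq, mul_re, mul_im, add_re, add_im, sub_re, sub_im, conj_re, conj_im, one_re,
    one_im, I_re, I_im]
  refine ⟨?_, ?_, ?_⟩ <;> ring

/-- Lemma 8.5: edge principal-curvature relation for discrete maximal surfaces
in Minkowski 3-space: the difference of the hyperboloid Gauss map along an edge
is -κ times the edge vector of the Weierstrass representation. -/
theorem stmt_13 (gi gs : ℂ) (hg : gs ≠ gi)
    (hgi : ‖gi‖ ≠ 1) (hgs : ‖gs‖ ≠ 1)
    (α : ℝ) (hα : α ≠ 0)
    (df : ℝ × ℝ × ℝ)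
    (hdf : df = (α / 2) • ((((1 + gs * gi) / (gs - gi)).re,
      (Complex.I * (1 - gs * gi) / (gs - gi)).re,
      -(((gs + gi) / (gs - gi)).re))))
    (n : ℂ → ℝ × ℝ × ℝ)
    (hn : ∀ w : ℂ, n w = ((1 - ‖w‖ ^ 2)⁻¹) •
      (2 * w.re, 2 * w.im, -(1 + ‖w‖ ^ 2)))
    (κ : ℝ)
    (hκ : κ = -(4 * ‖gs - gi‖ ^ 2) /
      (α * (1 - ‖gi‖ ^ 2) * (1 - ‖gs‖ ^ 2))) :
    n gs - n gi = -κ • df := by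
  have hd : ‖gs - gi‖ ≠ 0 := norm_ne_zero_iff.mpr (sub_ne_zero.mpr hg)
  have hpi : 1 - ‖gi‖ ^ 2 ≠ 0 := by
    rwa [sub_ne_zero, ne_comm, Ne, pow_eq_one_iff_of_nonneg (norm_nonneg _) two_ne_zero]
  have hps : 1 - ‖gs‖ ^ 2 ≠ 0 := by
    rwa [sub_ne_zero, ne_comm, Ne, pow_eq_one_iff_of_nonneg (norm_nonneg _) two_ne_zero]
  rw [hdf, hκ, weierstrass_edge_vector_eq_inv_sq_norm_smul,
    weierstrass_edge_numerator_eq_half_smul_sub, hn, hn]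
  match_scalars <;> field_simp <;> ring
end

section
/- Let g₋, g, g₊ be complex numbers with g₋ ≠ g, g ≠ g₊, |g₋| ≠ 1, |g| ≠ 1, |g₊| ≠ 1, and let α₁, α₂ be real numbers with α₁·α₂ > 0. Set T₁ := (1 − |g₋|²)(1 − |g|²) and T₂ := (1 − |g|²)(1 − |g₊|²), and for λ ∈ ℝ with λ ≠ 0 define κ₁(λ) := (2|g − g₋|² + T₁λα₁)/(T₁λα₁) and κ₂(λ) := (2|g₊ − g|² + T₂λα₂)/(T₂λα₂). Then the following are equivalent: (i) there exists ε > 0 such that κ₁(λ)·κ₂(λ) < 0 for all λ with 0 < |λ| < ε; (ii) (1 − |g₋|²)(1 − |g₊|²) < 0, i.e., exactly one of |g₋|², |g₊|² is less than 1 and the other is greater than 1. -/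
/-! As `λ → 0` the numerators of `κ₁` and `κ₂` tend to `2|g - g₋|² > 0` and `2|g₊ - g|² > 0`, so for
small `λ ≠ 0` the sign of `κ₁ κ₂` is that of `T₁α₁ · T₂α₂ · λ²`, i.e. of
`(1 - |g₋|²)(1 - |g₊|²) · (1 - |g|²)² α₁α₂`, which is the sign of `(1 - |g₋|²)(1 - |g₊|²)`. -/

open Filter Topology

lemma eventually_nhdsNE_zero_iff_exists_abs_lt {p : ℝ → Prop} :
    (∀ᶠ x in 𝓝[≠] 0, p x) ↔ ∃ ε > 0, ∀ x : ℝ, 0 < |x| → |x| < ε → p x := by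
  simp only [Filter.Eventually, Metric.mem_nhdsWithin_iff, Set.subset_def, Set.mem_inter_iff,
    Metric.mem_ball, Real.dist_0_eq_abs, Set.mem_compl_singleton_iff, ← abs_pos,
    and_comm (a := |_| < _), and_imp, Set.mem_ofPred_eq]

lemma mul_neg_iff_of_pos_right {α : Type*} [MulZeroClass α] [LinearOrder α] [PosMulMono α]
    [MulPosStrictMono α] {a b : α} (hb : 0 < b) : a * b < 0 ↔ a < 0 :=
  ⟨fun h ↦ neg_of_mul_neg_left h hb.le, fun h ↦ mul_neg_of_neg_of_pos h hb⟩

lemma eventually_div_mul_div_neg_iff {a₁ a₂ c₁ c₂ : ℝ} (ha₁ : 0 < a₁) (ha₂ : 0 < a₂) :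
    (∀ᶠ x in 𝓝[≠] 0, (a₁ + c₁ * x) / (c₁ * x) * ((a₂ + c₂ * x) / (c₂ * x)) < 0) ↔
      c₁ * c₂ < 0 := by
  have hnum : ∀ᶠ x in 𝓝 0, 0 < (a₁ + c₁ * x) * (a₂ + c₂ * x) := by
    have : Continuous fun x : ℝ ↦ (a₁ + c₁ * x) * (a₂ + c₂ * x) := by fun_prop
    exact continuousAt_const.eventually_lt this.continuousAt (by simpa using mul_pos ha₁ ha₂)
  have hsign : ∀ᶠ x in 𝓝[≠] 0,
      ((a₁ + c₁ * x) / (c₁ * x) * ((a₂ + c₂ * x) / (c₂ * x)) < 0 ↔ c₁ * c₂ < 0) := by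
    filter_upwards [nhdsWithin_le_nhds hnum, self_mem_nhdsWithin] with x hpos hx
    rw [div_mul_div_comm, div_neg_iff, mul_mul_mul_comm, ← sq]
    simp only [hpos, hpos.not_gt, true_and, false_and, or_false]
    exact mul_neg_iff_of_pos_right (sq_pos_of_ne_zero hx)
  refine ⟨fun h ↦ ?_, fun h ↦ hsign.mono fun x hx ↦ hx.mpr h⟩
  obtain ⟨x, hx, hiff⟩ := (h.and hsign).exists
  exact hiff.mp hx

theorem stmt_18_general (gm g gp : ℂ) (h1 : gm ≠ g) (h2 : g ≠ gp)
    (h0 : ‖g‖ ≠ 1)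
    (α₁ α₂ : ℝ) (hα : α₁ * α₂ > 0)
    (T₁ T₂ : ℝ)
    (hT₁ : T₁ = (1 - ‖gm‖ ^ 2) * (1 - ‖g‖ ^ 2))
    (hT₂ : T₂ = (1 - ‖g‖ ^ 2) * (1 - ‖gp‖ ^ 2))
    (κ₁ κ₂ : ℝ → ℝ)
    (hκ₁ : ∀ lam : ℝ, lam ≠ 0 →
      κ₁ lam = (2 * ‖g - gm‖ ^ 2 + T₁ * lam * α₁) / (T₁ * lam * α₁))
    (hκ₂ : ∀ lam : ℝ, lam ≠ 0 →
      κ₂ lam = (2 * ‖gp - g‖ ^ 2 + T₂ * lam * α₂) / (T₂ * lam * α₂)) :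
    (∃ ε > 0, ∀ lam : ℝ, 0 < |lam| → |lam| < ε → κ₁ lam * κ₂ lam < 0) ↔
      (1 - ‖gm‖ ^ 2) * (1 - ‖gp‖ ^ 2) < 0 := by
  have hg : 1 - ‖g‖ ^ 2 ≠ 0 :=
    sub_ne_zero.mpr (Ne.symm ((pow_eq_one_iff_of_nonneg (norm_nonneg g) two_ne_zero).not.mpr h0))
  have hT : T₁ * α₁ * (T₂ * α₂) =
      (1 - ‖gm‖ ^ 2) * (1 - ‖gp‖ ^ 2) * ((1 - ‖g‖ ^ 2) ^ 2 * (α₁ * α₂)) := by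
    rw [hT₁, hT₂]; ring
  have hκ : ∀ᶠ lam in 𝓝[≠] 0, κ₁ lam * κ₂ lam =
      (2 * ‖g - gm‖ ^ 2 + T₁ * α₁ * lam) / (T₁ * α₁ * lam) *
        ((2 * ‖gp - g‖ ^ 2 + T₂ * α₂ * lam) / (T₂ * α₂ * lam)) := by
    filter_upwards [self_mem_nhdsWithin] with lam hlam
    rw [hκ₁ lam hlam, hκ₂ lam hlam, mul_right_comm T₁, mul_right_comm T₂]
  rw [← eventually_nhdsNE_zero_iff_exists_abs_lt, eventually_congr (hκ.mono fun _ h ↦ by rw [h]),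
    eventually_div_mul_div_neg_iff, hT, mul_neg_iff_of_pos_right (mul_pos (sq_pos_of_ne_zero hg) hα)]
  · exact mul_pos two_pos (pow_pos (norm_pos_iff.mpr (sub_ne_zero.mpr h1.symm)) 2)
  · exact mul_pos two_pos (pow_pos (norm_pos_iff.mpr (sub_ne_zero.mpr h2.symm)) 2)

/-- Theorem 9.3: for a discrete CMC 1 surface in de Sitter 3-space, the product
of the principal curvatures on two consecutive edges is negative for all λ
sufficiently close to zero iff exactly one of |g₋|², |g₊|² is less than 1 and
the other greater than 1. -/
theorem stmt_18 (gm g gp : ℂ) (h1 : gm ≠ g) (h2 : g ≠ gp)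
    (hm : ‖gm‖ ≠ 1) (h0 : ‖g‖ ≠ 1) (hp : ‖gp‖ ≠ 1)
    (α₁ α₂ : ℝ) (hα : α₁ * α₂ > 0)
    (T₁ T₂ : ℝ)
    (hT₁ : T₁ = (1 - ‖gm‖ ^ 2) * (1 - ‖g‖ ^ 2))
    (hT₂ : T₂ = (1 - ‖g‖ ^ 2) * (1 - ‖gp‖ ^ 2))
    (κ₁ κ₂ : ℝ → ℝ)
    (hκ₁ : ∀ lam : ℝ, lam ≠ 0 →
      κ₁ lam = (2 * ‖g - gm‖ ^ 2 + T₁ * lam * α₁) / (T₁ * lam * α₁))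
    (hκ₂ : ∀ lam : ℝ, lam ≠ 0 →
      κ₂ lam = (2 * ‖gp - g‖ ^ 2 + T₂ * lam * α₂) / (T₂ * lam * α₂)) :
    (∃ ε > 0, ∀ lam : ℝ, 0 < |lam| → |lam| < ε → κ₁ lam * κ₂ lam < 0) ↔
      (1 - ‖gm‖ ^ 2) * (1 - ‖gp‖ ^ 2) < 0 :=
  stmt_18_general gm g gp h1 h2 h0 α₁ α₂ hα T₁ T₂ hT₁ hT₂ κ₁ κ₂ hκ₁ hκ₂
end
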